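/- arXiv:math/0608032 — 4 statements merged into one kernel-verified Lean document; each statement's English description precedes it below -/
import Mathlib

section
/- Let c, d be positive integers with gcd(c,d) = 1 and set r := c + d. For i ∈ ℤ/rℤ, say i is 'low' if its representative in {1,...,r} is ≤ c, and 'high' otherwise. Define n : (ℤ/rℤ)² → ℤ by n(i,j) = −1 if i is low and j is high, n(i,j) = +1 if i is high and j is low, and n(i,j) = 0 otherwise. Then for every pair (i,j) with n(i,j) = −1, there exists l ≥ 1 with n(i + l·d, j + l·d) ≠ 0, and for the least such l one has n(i + l·d, j + l·d) = +1. -/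
/-- `i` is "low" if its representative in `{1,...,r}` is `≤ c`. -/
def lowIdx (r c : ℕ) (i : ZMod r) : Prop := i.val ≠ 0 ∧ i.val ≤ c

instance (r c : ℕ) (i : ZMod r) : Decidable (lowIdx r c i) :=
  inferInstanceAs (Decidable (i.val ≠ 0 ∧ i.val ≤ c))

/-- The sign function: `-1` on (low, high), `+1` on (high, low), `0` otherwise. -/
def slopeSign (r c : ℕ) (i j : ZMod r) : ℤ :=
  if lowIdx r c i ∧ ¬ lowIdx r c j then -1
  else if ¬ lowIdx r c i ∧ lowIdx r c j then 1 else 0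

/-!
Track the difference `D(x, y) = (x - 1).val - (y - 1).val` of the representatives along the
orbit. Translating by `d` adds `d` to `(x - 1).val` and subtracts `r = c + d` exactly when `x` is
high, so one step changes `D` by `-r · n(x, y)`. Starting from `n(i, j) = -1` with
`-r < D(i, j) < 0`, the first step makes `D` positive, and `D` stays put while `n` vanishes; but a
pair with `n = -1` has `D < 0`, so the first nonzero value cannot be `-1`.
-/

theorem ZMod.val_add_natCast_of_lt {r m : ℕ} [NeZero r] (y : ZMod r) (hm : m < r) :
    (y + m).val = (y.val + m) % r := by
  rw [ZMod.val_add, ZMod.val_natCast_of_lt hm]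

section

variable {r c : ℕ}

theorem lowIdx_iff_val_sub_one_lt (hcr : c < r) (x : ZMod r) :
    lowIdx r c x ↔ (x - 1).val < c := by
  have : NeZero r := ⟨by omega⟩
  rcases Nat.eq_zero_or_pos c with rfl | hc
  · simp [lowIdx]
  have hx : x.val = ((x - 1).val + 1) % r := by
    rw [← Nat.cast_one, ← ZMod.val_add_natCast_of_lt _ (by omega), sub_add_cancel]
  have hlt := (x - 1).val_lt
  rw [lowIdx, hx]
  rcases Nat.lt_or_ge ((x - 1).val + 1) r with h | h
  · rw [Nat.mod_eq_of_lt h]; omega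
  · rw [show (x - 1).val + 1 = r by omega, Nat.mod_self]; omega

theorem slopeSign_eq_sub (x y : ZMod r) :
    slopeSign r c x y = (if lowIdx r c y then 1 else 0) - (if lowIdx r c x then 1 else 0) := by
  unfold slopeSign
  split_ifs <;> simp_all

theorem slopeSign_eq_neg_one_iff {x y : ZMod r} :
    slopeSign r c x y = -1 ↔ lowIdx r c x ∧ ¬ lowIdx r c y := by
  unfold slopeSign
  split_ifs <;> simp_all

theorem slopeSign_eq_neg_one_of_ne {x y : ZMod r} (h0 : slopeSign r c x y ≠ 0)
    (h1 : slopeSign r c x y ≠ 1) : slopeSign r c x y = -1 := by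
  unfold slopeSign at *
  split_ifs at * <;> simp_all

/-- `(x - 1).val + 1` is the representative of `x` in `{1, …, r}`. -/
def slopePotential (r : ℕ) (x y : ZMod r) : ℤ := (x - 1).val - (y - 1).val

theorem val_add_natCast_sub_one {d : ℕ} (hc : 0 < c) (hd : 0 < d) (x : ZMod (c + d)) :
    ((x + d - 1).val : ℤ)
      = (x - 1).val + d - if lowIdx (c + d) c x then 0 else (c + d : ℤ) := by
  have : NeZero (c + d) := ⟨by omega⟩
  have hlt := (x - 1).val_lt
  rw [add_sub_right_comm, ZMod.val_add_natCast_of_lt _ (by omega)]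
  split_ifs with h <;> rw [lowIdx_iff_val_sub_one_lt (by omega)] at h
  · rw [Nat.mod_eq_of_lt (by omega)]; push_cast; ring
  · rw [Nat.mod_eq_sub_mod (by omega), Nat.mod_eq_of_lt (by omega),
      Nat.cast_sub (by omega : c + d ≤ (x - 1).val + d)]
    push_cast; ring

theorem slopePotential_add_natCast {d : ℕ} (hc : 0 < c) (hd : 0 < d) (x y : ZMod (c + d)) :
    slopePotential (c + d) (x + d) (y + d)
      = slopePotential (c + d) x y - (c + d) * slopeSign (c + d) c x y := by
  rw [slopePotential, slopePotential, val_add_natCast_sub_one hc hd, val_add_natCast_sub_one hc hd,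
    slopeSign_eq_sub]
  split_ifs <;> ring

theorem neg_lt_slopePotential [NeZero r] (x y : ZMod r) : -(r : ℤ) < slopePotential r x y := by
  have := (x - 1).val_lt; have := (y - 1).val_lt
  unfold slopePotential; omega

theorem slopePotential_neg_of_slopeSign_eq_neg_one (hcr : c < r) {x y : ZMod r}
    (h : slopeSign r c x y = -1) : slopePotential r x y < 0 := by
  rw [slopeSign_eq_neg_one_iff, lowIdx_iff_val_sub_one_lt hcr, lowIdx_iff_val_sub_one_lt hcr] at h
  unfold slopePotential; omega

theorem slopePotential_orbit_of_slopeSign_eq_zero {d : ℕ} (hc : 0 < c) (hd : 0 < d)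
    (i j : ZMod (c + d)) {l : ℕ} (hl : 1 ≤ l)
    (hzero : ∀ k : ℕ, 1 ≤ k → k < l →
      slopeSign (c + d) c (i + (k : ZMod (c + d)) * d) (j + (k : ZMod (c + d)) * d) = 0) :
    slopePotential (c + d) (i + (l : ZMod (c + d)) * d) (j + (l : ZMod (c + d)) * d)
      = slopePotential (c + d) i j - (c + d) * slopeSign (c + d) c i j := by
  have hstep (x : ZMod (c + d)) (k : ℕ) :
      x + ((k + 1 : ℕ) : ZMod (c + d)) * d = x + (k : ZMod (c + d)) * d + d := by
    push_cast; ring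
  induction l, hl using Nat.le_induction with
  | base => simpa using slopePotential_add_natCast hc hd i j
  | succ k hk ih =>
    rw [hstep, hstep, slopePotential_add_natCast hc hd, hzero k hk (by omega), mul_zero,
      sub_zero, ih fun k' hk' hlt => hzero k' hk' (by omega)]

end

theorem stmt3_general (c d : ℕ) (hc : 0 < c) (hd : 0 < d)
    (i j : ZMod (c + d)) (hij : slopeSign (c + d) c i j = -1) :
    (∃ l : ℕ, 1 ≤ l ∧
      slopeSign (c + d) c (i + (l : ZMod (c + d)) * (d : ZMod (c + d)))
        (j + (l : ZMod (c + d)) * (d : ZMod (c + d))) ≠ 0) ∧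
    ∀ l : ℕ, 1 ≤ l →
      slopeSign (c + d) c (i + (l : ZMod (c + d)) * (d : ZMod (c + d)))
        (j + (l : ZMod (c + d)) * (d : ZMod (c + d))) ≠ 0 →
      (∀ l' : ℕ, 1 ≤ l' → l' < l →
        slopeSign (c + d) c (i + (l' : ZMod (c + d)) * (d : ZMod (c + d)))
          (j + (l' : ZMod (c + d)) * (d : ZMod (c + d))) = 0) →
      slopeSign (c + d) c (i + (l : ZMod (c + d)) * (d : ZMod (c + d)))
        (j + (l : ZMod (c + d)) * (d : ZMod (c + d))) = 1 := by
  have : NeZero (c + d) := ⟨by omega⟩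
  refine ⟨⟨c + d, by omega, by simp [hij]⟩, fun l hl hne hzero => ?_⟩
  by_contra hne_one
  have hneg := slopePotential_neg_of_slopeSign_eq_neg_one (by omega)
    (slopeSign_eq_neg_one_of_ne hne hne_one)
  rw [slopePotential_orbit_of_slopeSign_eq_zero hc hd i j hl hzero, hij] at hneg
  have := neg_lt_slopePotential i j
  push_cast at hneg this
  omega

/-- starting at a pair of value `−1`, along translation by `d` on `(ℤ/rℤ)²`,
some later value is nonzero and the first nonzero value is `+1`. -/
theorem stmt3 (c d : ℕ) (hc : 0 < c) (hd : 0 < d) (hcd : Nat.gcd c d = 1)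
    (i j : ZMod (c + d)) (hij : slopeSign (c + d) c i j = -1) :
    (∃ l : ℕ, 1 ≤ l ∧
      slopeSign (c + d) c (i + (l : ZMod (c + d)) * (d : ZMod (c + d)))
        (j + (l : ZMod (c + d)) * (d : ZMod (c + d))) ≠ 0) ∧
    ∀ l : ℕ, 1 ≤ l →
      slopeSign (c + d) c (i + (l : ZMod (c + d)) * (d : ZMod (c + d)))
        (j + (l : ZMod (c + d)) * (d : ZMod (c + d))) ≠ 0 →
      (∀ l' : ℕ, 1 ≤ l' → l' < l →
        slopeSign (c + d) c (i + (l' : ZMod (c + d)) * (d : ZMod (c + d)))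
          (j + (l' : ZMod (c + d)) * (d : ZMod (c + d))) = 0) →
      slopeSign (c + d) c (i + (l : ZMod (c + d)) * (d : ZMod (c + d)))
        (j + (l : ZMod (c + d)) * (d : ZMod (c + d))) = 1 :=
  stmt3_general c d hc hd i j hij
end

section
/- Let c_1, d_1, c_2, d_2 be positive integers with gcd(c_1,d_1) = gcd(c_2,d_2) = 1, r_1 := c_1 + d_1, r_2 := c_2 + d_2, and assume c_2·d_1 < c_1·d_2 (i.e., d_1/r_1 < d_2/r_2). For (i,j) ∈ (ℤ/r_2ℤ) × (ℤ/r_1ℤ), using representatives in {1,...,r_2} and {1,...,r_1} respectively, define n(i,j) = −1 if i ≤ c_2 and j > c_1, n(i,j) = +1 if i > c_2 and j ≤ c_1, and n(i,j) = 0 otherwise. Then for every pair (i,j) with n(i,j) = −1, there exists l ≥ 1 with n(i + l·d_2, j + l·d_1) ≠ 0, and for the least such l one has n(i + l·d_2, j + l·d_1) = +1. -/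
/-!
Write `r = c + d` and let `w(l)` count how often the orbit `z, z + d, …, z + l d` in `ℤ/rℤ`
has wrapped around. A step by `d` wraps exactly when the current representative in `{1, …, r}`
exceeds `c`, so `n(l) = Δw₂(l) - Δw₁(l)`: the value of `n` is the increment of the height
`T = w₂ - w₁`, with `T 0 = 0` and `T 1 = -1`. Because `d₁ / r₁ ≤ d₂ / r₂`, the orbit in `ℤ/r₁ℤ`
never gets more than one turn ahead, i.e. `T ≥ -1`; so after the step `-1` the height cannot
drop again before it rises. Strictness of the slope inequality makes
`T (r₁ r₂) = r₁ d₂ - r₂ d₁ > 0`, so it does rise eventually.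
-/

/-- The sign function on `(ℤ/r₂ℤ) × (ℤ/r₁ℤ)`, using representatives in `{1,...,r}`:
`-1` if `i ≤ c₂` and `j > c₁`, `+1` if `i > c₂` and `j ≤ c₁`, `0` otherwise. -/
def slopeSign2 (r₂ c₂ r₁ c₁ : ℕ) (i : ZMod r₂) (j : ZMod r₁) : ℤ :=
  if (i.val ≠ 0 ∧ i.val ≤ c₂) ∧ ¬(j.val ≠ 0 ∧ j.val ≤ c₁) then -1
  else if ¬(i.val ≠ 0 ∧ i.val ≤ c₂) ∧ (j.val ≠ 0 ∧ j.val ≤ c₁) then 1 else 0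

theorem add_div_eq_div_add_ite {c d : ℕ} (hr : 0 < c + d) (y : ℕ) :
    (y + d) / (c + d) = y / (c + d) + if y % (c + d) < c then 0 else 1 := by
  have hmod : y % (c + d) < c + d := Nat.mod_lt y hr
  conv_lhs => rw [← Nat.mod_add_div y (c + d), add_right_comm, mul_comm,
    Nat.add_mul_div_right _ _ hr, add_comm]
  congr 1
  split_ifs with h
  · exact Nat.div_eq_of_lt (by omega)
  · exact Nat.div_eq_of_lt_le (by omega) (by omega)

theorem ZMod.val_sub_one_lt_iff {c d : ℕ} (hd : 0 < d) (z : ZMod (c + d)) :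
    (z - 1).val < c ↔ z.val ≠ 0 ∧ z.val ≤ c := by
  have : NeZero (c + d) := ⟨by omega⟩
  have hz := z.val_lt
  have hneg : ((c + d - 1 : ℕ) : ZMod (c + d)) = -1 := eq_neg_of_add_eq_zero_left <| by
    rw [← Nat.cast_succ, Nat.succ_eq_add_one, Nat.sub_add_cancel (by omega), ZMod.natCast_self]
  rw [sub_eq_add_neg, ← hneg, ZMod.val_add, ZMod.val_natCast,
    Nat.mod_eq_of_lt (show c + d - 1 < c + d by omega)]
  rcases Nat.eq_zero_or_pos z.val with h0 | hpos
  · rw [h0, zero_add, Nat.mod_eq_of_lt (by omega)]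
    omega
  · rw [show z.val + (c + d - 1) = (z.val - 1) + (c + d) by omega, Nat.add_mod_right,
      Nat.mod_eq_of_lt (by omega)]
    omega

theorem ZMod.val_add_natCast_mul {n : ℕ} [NeZero n] (z : ZMod n) (l d : ℕ) :
    (z + (l : ZMod n) * (d : ZMod n)).val = (z.val + l * d) % n := by
  rw [← Nat.cast_mul, ZMod.val_add, ZMod.val_natCast, Nat.add_mod_mod]

/-- Since the representative of `z` in `{1, …, c + d}` is `(z - 1).val + 1`, this counts how
often the orbit `z, z + d, …, z + l d` has wrapped around. -/
def wraps (c d : ℕ) (z : ZMod (c + d)) (l : ℕ) : ℕ := ((z - 1).val + l * d) / (c + d)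

theorem wraps_zero {c d : ℕ} (hd : 0 < d) (z : ZMod (c + d)) : wraps c d z 0 = 0 := by
  have : NeZero (c + d) := ⟨by omega⟩
  simp only [wraps, zero_mul, add_zero]
  exact Nat.div_eq_of_lt (z - 1).val_lt

theorem wraps_succ {c d : ℕ} (hd : 0 < d) (z : ZMod (c + d)) (l : ℕ) :
    wraps c d z (l + 1) =
      wraps c d z l + if (z + l * d).val ≠ 0 ∧ (z + l * d).val ≤ c then 0 else 1 := by
  have : NeZero (c + d) := ⟨by omega⟩
  have hwrap :
      ((z - 1).val + l * d) % (c + d) < c ↔ (z + l * d).val ≠ 0 ∧ (z + l * d).val ≤ c := by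
    rw [← ZMod.val_sub_one_lt_iff hd, add_sub_right_comm, ZMod.val_add_natCast_mul]
  rw [wraps, wraps, add_mul, one_mul, ← add_assoc, add_div_eq_div_add_ite (by omega)]
  simp only [hwrap]

theorem wraps_mul_period {c d : ℕ} (hd : 0 < d) (z : ZMod (c + d)) (m : ℕ) :
    wraps c d z (m * (c + d)) = m * d := by
  have : NeZero (c + d) := ⟨by omega⟩
  rw [wraps, mul_right_comm, Nat.add_mul_div_right _ _ (by omega),
    Nat.div_eq_of_lt (z - 1).val_lt, zero_add]

theorem wraps_le_wraps_add_one {c₁ d₁ c₂ d₂ : ℕ} (hd₁ : 0 < d₁) (hd₂ : 0 < d₂)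
    (hslope : d₁ * (c₂ + d₂) ≤ d₂ * (c₁ + d₁)) (i : ZMod (c₂ + d₂)) (j : ZMod (c₁ + d₁))
    (l : ℕ) : wraps c₁ d₁ j l ≤ wraps c₂ d₂ i l + 1 := by
  have : NeZero (c₁ + d₁) := ⟨by omega⟩
  set q := wraps c₂ d₂ i l
  have hq : l * d₂ < (c₂ + d₂) * (q + 1) :=
    lt_of_le_of_lt (Nat.le_add_left _ _) (Nat.lt_mul_div_succ _ (by omega))
  have hl : l * d₁ < (q + 1) * (c₁ + d₁) := by
    refine Nat.lt_of_mul_lt_mul_right (a := c₂ + d₂) ?_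
    calc l * d₁ * (c₂ + d₂) ≤ l * d₂ * (c₁ + d₁) := by
          rw [mul_assoc, mul_assoc]; exact Nat.mul_le_mul_left _ hslope
      _ < (c₂ + d₂) * (q + 1) * (c₁ + d₁) := Nat.mul_lt_mul_of_pos_right hq (by omega)
      _ = (q + 1) * (c₁ + d₁) * (c₂ + d₂) := by ring
  have hj := (j - 1).val_lt
  rw [← Nat.lt_succ_iff, wraps, Nat.div_lt_iff_lt_mul (by omega)]
  nlinarith

theorem slopeSign2_eq_sub (r₂ c₂ r₁ c₁ : ℕ) (i : ZMod r₂) (j : ZMod r₁) :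
    slopeSign2 r₂ c₂ r₁ c₁ i j =
      (if j.val ≠ 0 ∧ j.val ≤ c₁ then 1 else 0) - (if i.val ≠ 0 ∧ i.val ≤ c₂ then 1 else 0) := by
  unfold slopeSign2
  split_ifs <;> simp_all

theorem first_nonzero_step_eq_one {n T : ℕ → ℤ} (hn : ∀ l, n l = T (l + 1) - T l)
    (hle : ∀ l, n l ≤ 1) (h0 : n 0 = -1) (hlow : ∀ l, T 0 - 1 ≤ T l) (hgrow : ∃ L, T 0 < T L) :
    (∃ l, 1 ≤ l ∧ n l ≠ 0) ∧
      ∀ l, 1 ≤ l → n l ≠ 0 → (∀ l', 1 ≤ l' → l' < l → n l' = 0) → n l = 1 := by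
  have hflat : ∀ l, 1 ≤ l → (∀ l', 1 ≤ l' → l' < l → n l' = 0) → T l = T 0 - 1 := by
    intro l hl
    induction l, hl using Nat.le_induction with
    | base => intro _; linarith [hn 0]
    | succ l hl ih =>
      intro hzero
      have hstep := hn l
      rw [hzero l hl (by omega)] at hstep
      linarith [ih fun l' h₁ h₂ => hzero l' h₁ (by omega)]
  refine ⟨?_, fun l hl hne hzero => ?_⟩
  · by_contra! hall
    obtain ⟨L, hL⟩ := hgrow
    have hL1 : 1 ≤ L := Nat.one_le_iff_ne_zero.mpr fun h => by simp [h] at hL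
    linarith [hflat L hL1 fun l' h _ => hall l' h]
  · have hnonneg : 0 ≤ n l := by linarith [hn l, hlow (l + 1), hflat l hl hzero]
    have := hle l
    omega

theorem stmt4_general (c₁ d₁ c₂ d₂ : ℕ) (hd₁ : 0 < d₁) (hd₂ : 0 < d₂)
    (hlt : c₂ * d₁ < c₁ * d₂)
    (i : ZMod (c₂ + d₂)) (j : ZMod (c₁ + d₁))
    (hij : slopeSign2 (c₂ + d₂) c₂ (c₁ + d₁) c₁ i j = -1) :
    (∃ l : ℕ, 1 ≤ l ∧
      slopeSign2 (c₂ + d₂) c₂ (c₁ + d₁) c₁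
        (i + (l : ZMod (c₂ + d₂)) * (d₂ : ZMod (c₂ + d₂)))
        (j + (l : ZMod (c₁ + d₁)) * (d₁ : ZMod (c₁ + d₁))) ≠ 0) ∧
    ∀ l : ℕ, 1 ≤ l →
      slopeSign2 (c₂ + d₂) c₂ (c₁ + d₁) c₁
        (i + (l : ZMod (c₂ + d₂)) * (d₂ : ZMod (c₂ + d₂)))
        (j + (l : ZMod (c₁ + d₁)) * (d₁ : ZMod (c₁ + d₁))) ≠ 0 →
      (∀ l' : ℕ, 1 ≤ l' → l' < l →
        slopeSign2 (c₂ + d₂) c₂ (c₁ + d₁) c₁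
          (i + (l' : ZMod (c₂ + d₂)) * (d₂ : ZMod (c₂ + d₂)))
          (j + (l' : ZMod (c₁ + d₁)) * (d₁ : ZMod (c₁ + d₁))) = 0) →
      slopeSign2 (c₂ + d₂) c₂ (c₁ + d₁) c₁
        (i + (l : ZMod (c₂ + d₂)) * (d₂ : ZMod (c₂ + d₂)))
        (j + (l : ZMod (c₁ + d₁)) * (d₁ : ZMod (c₁ + d₁))) = 1 := by
  have hslope : d₁ * (c₂ + d₂) < d₂ * (c₁ + d₁) := by nlinarith
  refine first_nonzero_step_eq_one (T := fun l => (wraps c₂ d₂ i l : ℤ) - wraps c₁ d₁ j l)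
    (fun l => ?_) (fun l => ?_) (by simpa using hij) (fun l => ?_)
    ⟨(c₁ + d₁) * (c₂ + d₂), ?_⟩
  · rw [slopeSign2_eq_sub, wraps_succ hd₂, wraps_succ hd₁]
    split_ifs <;> push_cast <;> ring
  · rw [slopeSign2_eq_sub]
    split_ifs <;> norm_num
  · have := wraps_le_wraps_add_one hd₁ hd₂ hslope.le i j l
    simp only [wraps_zero hd₁, wraps_zero hd₂]
    omega
  · have h₂ := wraps_mul_period hd₂ i (c₁ + d₁)
    have h₁ := wraps_mul_period hd₁ j (c₂ + d₂)
    rw [mul_comm (c₂ + d₂) (c₁ + d₁)] at h₁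
    simp only [wraps_zero hd₁, wraps_zero hd₂, h₁, h₂]
    push_cast
    linarith [(Nat.cast_lt (α := ℤ)).mpr hslope]

/-- along simultaneous translation by `(d₂, d₁)`, the first nonzero
value of `n` after a value `−1` is always `+1`. -/
theorem stmt4 (c₁ d₁ c₂ d₂ : ℕ) (hc₁ : 0 < c₁) (hd₁ : 0 < d₁) (hc₂ : 0 < c₂) (hd₂ : 0 < d₂)
    (hg₁ : Nat.gcd c₁ d₁ = 1) (hg₂ : Nat.gcd c₂ d₂ = 1)
    (hlt : c₂ * d₁ < c₁ * d₂)
    (i : ZMod (c₂ + d₂)) (j : ZMod (c₁ + d₁))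
    (hij : slopeSign2 (c₂ + d₂) c₂ (c₁ + d₁) c₁ i j = -1) :
    (∃ l : ℕ, 1 ≤ l ∧
      slopeSign2 (c₂ + d₂) c₂ (c₁ + d₁) c₁
        (i + (l : ZMod (c₂ + d₂)) * (d₂ : ZMod (c₂ + d₂)))
        (j + (l : ZMod (c₁ + d₁)) * (d₁ : ZMod (c₁ + d₁))) ≠ 0) ∧
    ∀ l : ℕ, 1 ≤ l →
      slopeSign2 (c₂ + d₂) c₂ (c₁ + d₁) c₁
        (i + (l : ZMod (c₂ + d₂)) * (d₂ : ZMod (c₂ + d₂)))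
        (j + (l : ZMod (c₁ + d₁)) * (d₁ : ZMod (c₁ + d₁))) ≠ 0 →
      (∀ l' : ℕ, 1 ≤ l' → l' < l →
        slopeSign2 (c₂ + d₂) c₂ (c₁ + d₁) c₁
          (i + (l' : ZMod (c₂ + d₂)) * (d₂ : ZMod (c₂ + d₂)))
          (j + (l' : ZMod (c₁ + d₁)) * (d₁ : ZMod (c₁ + d₁))) = 0) →
      slopeSign2 (c₂ + d₂) c₂ (c₁ + d₁) c₁
        (i + (l : ZMod (c₂ + d₂)) * (d₂ : ZMod (c₂ + d₂)))
        (j + (l : ZMod (c₁ + d₁)) * (d₁ : ZMod (c₁ + d₁))) = 1 :=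
  stmt4_general c₁ d₁ c₂ d₂ hd₁ hd₂ hlt i j hij
end

section
/- Let R be a commutative ring, I an ideal of R with I² = 0, and n a positive integer. Then the kernel of the induced ring homomorphism W_n(R) → W_n(R/I) on truncated Witt vectors of length n is a nilpotent ideal; in particular, any Witt vector in W_n(R) all of whose components lie in I maps to a nilpotent element, and the kernel ideal K satisfies K^N = 0 for some N (depending only on n and the prime p). -/
/-- The ring homomorphism `W_n(R) → W_n(S)` induced functorially by `f : R →+* S`. -/
noncomputable def truncatedWittVectorMap (p n : ℕ) [hp : Fact p.Prime]
    {R S : Type*} [CommRing R] [CommRing S] (f : R →+* S) :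
    TruncatedWittVector p n R →+* TruncatedWittVector p n S :=
  RingHom.liftOfRightInverse (WittVector.truncate n) TruncatedWittVector.out
    TruncatedWittVector.truncateFun_out
    ⟨(WittVector.truncate n).comp (WittVector.map f), fun x hx => by
      rw [WittVector.mem_ker_truncate] at hx
      rw [RingHom.mem_ker, RingHom.comp_apply, ← RingHom.mem_ker,
        WittVector.mem_ker_truncate]
      intro i hi
      rw [WittVector.map_coeff, hx i hi, map_zero]⟩

/-!
The `n`-th coefficient of a product of Witt vectors is `wittMul p n`, an integral polynomial in
the coefficients of both factors which vanishes as soon as either factor is `0`. Hence every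
monomial of it involves a coefficient of `x` and a coefficient of `y`, so if these lie in ideals
`I` and `J`, the coefficients of `x * y` lie in `I * J`. With `I = J` and `I ^ 2 = 0`, the kernel
of `W_n(R) → W_n(R/I)` squares to zero.
-/

open MvPolynomial

namespace MvPolynomial

variable {σ R : Type*} [CommRing R]

theorem mem_ideal_span_X_image_of_aeval_eq_zero (A : Set σ) [DecidablePred (· ∈ A)]
    {f : MvPolynomial σ R}
    (h : aeval (fun i => if i ∈ A then (0 : MvPolynomial σ R) else X i) f = 0) :
    f ∈ Ideal.span (X '' A : Set (MvPolynomial σ R)) := by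
  set kill : MvPolynomial σ R →ₐ[R] MvPolynomial σ R :=
    aeval fun i => if i ∈ A then 0 else X i
  suffices ∀ g, g - kill g ∈ Ideal.span (X '' A : Set (MvPolynomial σ R)) by
    simpa [h] using this f
  intro g
  induction g using MvPolynomial.induction_on with
  | C a => simp
  | add g g' hg hg' => simpa [add_sub_add_comm] using Ideal.add_mem _ hg hg'
  | mul_X g i hg =>
    by_cases hi : i ∈ A
    · simpa [kill, hi] using
        Ideal.mul_mem_left _ g (Ideal.subset_span (Set.mem_image_of_mem X hi))
    · simpa [kill, hi, sub_mul] using Ideal.mul_mem_right (X i) _ hg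

theorem span_X_image_inf_span_X_image_le_mul {A B : Set σ} (hAB : Disjoint A B) :
    Ideal.span (X '' A : Set (MvPolynomial σ R)) ⊓ Ideal.span (X '' B) ≤
      Ideal.span (X '' A) * Ideal.span (X '' B) := by
  classical
  rintro f ⟨hA, hB⟩
  rw [SetLike.mem_coe, mem_ideal_span_X_image] at hA hB
  have hf : f ∈ Ideal.span ((fun m => monomial m (1 : R)) ''
      {m | ∃ a ∈ A, ∃ b ∈ B, m = Finsupp.single a 1 + Finsupp.single b 1}) := by
    rw [mem_ideal_span_monomial_image]
    intro m hm
    obtain ⟨a, ha, hma⟩ := hA m hm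
    obtain ⟨b, hb, hmb⟩ := hB m hm
    have hab : a ≠ b := hAB.ne_of_mem ha hb
    refine ⟨_, ⟨a, ha, b, hb, rfl⟩, fun i => ?_⟩
    simp only [Finsupp.add_apply, Finsupp.single_apply]
    split_ifs <;> subst_vars <;> simp_all <;> omega
  refine (Ideal.span_le.2 ?_) hf
  rintro _ ⟨_, ⟨a, ha, b, hb, rfl⟩, rfl⟩
  rw [SetLike.mem_coe]
  beta_reduce
  rw [← mul_one (1 : R), ← monomial_mul]
  exact Ideal.mul_mem_mul (Ideal.subset_span ⟨a, ha, rfl⟩) (Ideal.subset_span ⟨b, hb, rfl⟩)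

end MvPolynomial

namespace WittVector

variable {p : ℕ} [Fact p.Prime] {R : Type*} [CommRing R]

theorem wittMul_mem_span_X_image (n : ℕ) (b : Fin 2) :
    wittMul p n ∈ Ideal.span (X '' {v : Fin 2 × ℕ | v.1 = b}) := by
  classical
  apply mem_ideal_span_X_image_of_aeval_eq_zero
  -- Killing the variables of factor `b` evaluates `wittMul` at a product with a zero factor.
  set kill : Fin 2 × ℕ → MvPolynomial (Fin 2 × ℕ) ℤ :=
    fun v => if v ∈ {v : Fin 2 × ℕ | v.1 = b} then 0 else X v
  have hkill : aeval kill (wittMul p n) =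
      (mk p (fun k => kill (0, k)) * mk p (fun k => kill (1, k))).coeff n := by
    have huncurry : Function.uncurry ![(mk p fun k => kill (0, k)).coeff,
        (mk p fun k => kill (1, k)).coeff] = kill := by
      funext ⟨i, k⟩
      fin_cases i <;> rfl
    rw [mul_coeff, peval, huncurry]
    rfl
  have hzero : mk p (fun k => kill (b, k)) = 0 := by
    ext k
    simp [kill]
  rw [hkill]
  fin_cases b <;> simp_all

theorem mul_coeff_mem_mul (I J : Ideal R) {x y : WittVector p R} (hx : ∀ n, x.coeff n ∈ I)
    (hy : ∀ n, y.coeff n ∈ J) (n : ℕ) : (x * y).coeff n ∈ I * J := by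
  set φ : MvPolynomial (Fin 2 × ℕ) ℤ →+* R :=
    (aeval (R := ℤ) (Function.uncurry ![x.coeff, y.coeff])).toRingHom
  have hmap (b : Fin 2) (K : Ideal R) (hK : ∀ k, ![x.coeff, y.coeff] b k ∈ K) :
      Ideal.map φ (Ideal.span (X '' {v : Fin 2 × ℕ | v.1 = b})) ≤ K := by
    rw [Ideal.map_span, Ideal.span_le]
    rintro _ ⟨_, ⟨⟨c, k⟩, rfl, rfl⟩, rfl⟩
    simpa [φ] using hK k
  have hdisj : Disjoint {v : Fin 2 × ℕ | v.1 = 0} {v | v.1 = 1} :=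
    Set.disjoint_left.2 fun v h0 h1 => by simp_all
  have hmem := span_X_image_inf_span_X_image_le_mul hdisj
    ⟨wittMul_mem_span_X_image (p := p) n 0, wittMul_mem_span_X_image (p := p) n 1⟩
  have hle : Ideal.map φ (Ideal.span (X '' {v : Fin 2 × ℕ | v.1 = 0}) *
      Ideal.span (X '' {v | v.1 = 1})) ≤ I * J := by
    rw [Ideal.map_mul]
    exact Ideal.mul_mono (hmap 0 I hx) (hmap 1 J hy)
  rw [mul_coeff]
  exact hle (Ideal.mem_map_of_mem φ hmem)

end WittVector

namespace TruncatedWittVector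

variable {p n : ℕ} {R : Type*} [CommRing R]

theorem coeff_out_mem {I : Ideal R} {x : TruncatedWittVector p n R}
    (hx : ∀ i, x.coeff i ∈ I) (k : ℕ) : x.out.coeff k ∈ I := by
  by_cases hk : k < n
  · simpa only [← coeff_out x ⟨k, hk⟩] using hx ⟨k, hk⟩
  · simp [out, hk]

theorem mul_coeff_mem_mul [Fact p.Prime] (I J : Ideal R) {x y : TruncatedWittVector p n R}
    (hx : ∀ i, x.coeff i ∈ I) (hy : ∀ i, y.coeff i ∈ J) (i : Fin n) :
    (x * y).coeff i ∈ I * J := by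
  rw [← truncateFun_out x, ← truncateFun_out y, ← WittVector.truncateFun_mul,
    WittVector.coeff_truncateFun]
  exact WittVector.mul_coeff_mem_mul I J (coeff_out_mem hx) (coeff_out_mem hy) i

end TruncatedWittVector

section truncatedWittVectorMap

variable {p n : ℕ} [Fact p.Prime] {R : Type*} [CommRing R]

theorem truncatedWittVectorMap_truncate {S : Type*} [CommRing S] (f : R →+* S)
    (x : WittVector p R) :
    truncatedWittVectorMap p n f (WittVector.truncate n x) =
      WittVector.truncate n (WittVector.map f x) :=
  RingHom.liftOfRightInverse_comp_apply _ _ _ _ x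

theorem coeff_truncatedWittVectorMap {S : Type*} [CommRing S] (f : R →+* S)
    (x : TruncatedWittVector p n R) (i : Fin n) :
    (truncatedWittVectorMap p n f x).coeff i = f (x.coeff i) := by
  obtain ⟨y, rfl⟩ := WittVector.truncate_surjective (p := p) (R := R) n x
  rw [truncatedWittVectorMap_truncate, WittVector.coeff_truncate, WittVector.coeff_truncate,
    WittVector.map_coeff]

theorem mem_ker_truncatedWittVectorMap_mk_iff (I : Ideal R) (x : TruncatedWittVector p n R) :
    x ∈ RingHom.ker (truncatedWittVectorMap p n (Ideal.Quotient.mk I)) ↔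
      ∀ i, x.coeff i ∈ I := by
  simp only [RingHom.mem_ker, TruncatedWittVector.ext_iff, coeff_truncatedWittVectorMap,
    TruncatedWittVector.coeff_zero, Ideal.Quotient.eq_zero_iff_mem]

theorem ker_truncatedWittVectorMap_mk_sq_eq_bot {I : Ideal R} (hI : I ^ 2 = ⊥) :
    RingHom.ker (truncatedWittVectorMap p n (Ideal.Quotient.mk I)) ^ 2 = ⊥ := by
  refine eq_bot_iff.2 ?_
  rw [sq, Ideal.mul_le]
  intro x hx y hy
  rw [mem_ker_truncatedWittVectorMap_mk_iff] at hx hy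
  rw [Ideal.mem_bot]
  ext i
  rw [TruncatedWittVector.coeff_zero, ← Ideal.mem_bot, ← hI, sq]
  exact TruncatedWittVector.mul_coeff_mem_mul I I hx hy i

end truncatedWittVectorMap

theorem stmt11_general (p : ℕ) [Fact p.Prime] (n : ℕ)
    (R : Type*) [CommRing R] (I : Ideal R) (hI : I ^ 2 = ⊥) :
    ∃ N : ℕ,
      (RingHom.ker (truncatedWittVectorMap p n (Ideal.Quotient.mk I))) ^ N = ⊥ ∧
      ∀ x : TruncatedWittVector p n R, (∀ i : Fin n, x.coeff i ∈ I) → IsNilpotent x := by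
  have hker := ker_truncatedWittVectorMap_mk_sq_eq_bot (p := p) (n := n) hI
  refine ⟨2, hker, fun x hx => ⟨2, ?_⟩⟩
  have hsq := Ideal.pow_mem_pow ((mem_ker_truncatedWittVectorMap_mk_iff I x).2 hx) 2
  rwa [hker, Ideal.mem_bot] at hsq

/-- if `I² = 0`, the kernel of `W_n(R) → W_n(R/I)` is a nilpotent ideal;
in particular every truncated Witt vector with all components in `I` is nilpotent. -/
theorem stmt11 (p : ℕ) [Fact p.Prime] (n : ℕ) (hn : 0 < n)
    (R : Type*) [CommRing R] (I : Ideal R) (hI : I ^ 2 = ⊥) :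
    ∃ N : ℕ,
      (RingHom.ker (truncatedWittVectorMap p n (Ideal.Quotient.mk I))) ^ N = ⊥ ∧
      ∀ x : TruncatedWittVector p n R, (∀ i : Fin n, x.coeff i ∈ I) → IsNilpotent x :=
  stmt11_general p n R I hI
end

section
/- Let k be a perfect field of characteristic p > 0 and W(k) its ring of Witt vectors. Let M = F¹ ⊕ F⁰ be a direct sum of finite free W(k)-modules. Let g be a W(k)-linear automorphism of M whose reduction modulo p preserves the submodule F¹/pF¹ of M/pM. Then g can be written as a product g = u ∘ h ∘ w, where: u = 1_M + n₊ with n₊ ∈ Hom(F⁰,F¹) (extended by zero on F¹); h is an automorphism of M preserving both F¹ and F⁰; and w = 1_M + n₋ with n₋ ∈ p·Hom(F¹,F⁰) (extended by zero on F⁰), i.e. w reduces to the identity modulo p. -/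
/-!
Write `g` as a block matrix `[[a, b], [c, d]]`. The hypothesis says `c = p • c'`, and since `F¹`
is projective `c'` can be chosen linear. Then `d` is surjective modulo `p`, hence bijective by
Nakayama's lemma (`p` lies in the Jacobson radical of `W(k)`, as `1 + p y` has constant
coefficient `1`) and Orzech's theorem for the finite module `F⁰`. Once `d` is invertible, block
Gaussian elimination gives
`g = [[1, b d⁻¹], [0, 1]] · diag(a - b d⁻¹ c, d) · [[1, 0], [d⁻¹ c, 1]]`, where the Schur
complement `a - b d⁻¹ c` is invertible because `g` is, and `d⁻¹ c = p • d⁻¹ c'`.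
-/

open LinearMap

section Blocks

variable {R F1 F0 : Type*} [Ring R] [AddCommGroup F1] [AddCommGroup F0] [Module R F1]
  [Module R F0]

theorem LinearMap.coprod_prod_coprod_eq_of_linearEquiv₂₂ (a : F1 →ₗ[R] F1) (b : F0 →ₗ[R] F1)
    (c : F1 →ₗ[R] F0) (d : F0 ≃ₗ[R] F0) :
    (a.coprod b).prod (c.coprod d.toLinearMap) =
      (1 + inl R F1 F0 ∘ₗ (b ∘ₗ d.symm) ∘ₗ snd R F1 F0) ∘ₗ
        (a - b ∘ₗ d.symm ∘ₗ c).prodMap d.toLinearMap ∘ₗ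
        (1 + inr R F1 F0 ∘ₗ (d.symm ∘ₗ c) ∘ₗ fst R F1 F0) := by
  ext <;> simp

theorem LinearMap.bijective_sub_comp_symm_comp_of_bijective (a : F1 →ₗ[R] F1) (b : F0 →ₗ[R] F1)
    (c : F1 →ₗ[R] F0) (d : F0 ≃ₗ[R] F0)
    (hg : Function.Bijective ((a.coprod b).prod (c.coprod d.toLinearMap))) :
    Function.Bijective (a - b ∘ₗ d.symm ∘ₗ c) := by
  set g := (a.coprod b).prod (c.coprod d.toLinearMap)
  have key : ∀ x, g (x, -d.symm (c x)) = ((a - b ∘ₗ d.symm ∘ₗ c) x, 0) := by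
    intro x; simp [g, sub_eq_add_neg]
  refine ⟨fun x x' hxx' => ?_, fun z => ?_⟩
  · have := hg.1 ((key x).trans ((congrArg (·, (0 : F0)) hxx').trans (key x').symm))
    exact (Prod.ext_iff.mp this).1
  · obtain ⟨⟨x, y⟩, hxy⟩ := hg.2 (z, 0)
    have hy : y = -d.symm (c x) := by
      have : c x + d y = 0 := by simpa [g] using congrArg Prod.snd hxy
      rw [eq_neg_iff_add_eq_zero, ← d.symm_apply_apply y, ← map_add, add_comm, this, map_zero]
    refine ⟨x, ?_⟩
    rw [hy, key] at hxy
    exact (Prod.ext_iff.mp hxy).1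

theorem LinearEquiv.map_range_inl_prodCongr (e₁ : F1 ≃ₗ[R] F1) (e₀ : F0 ≃ₗ[R] F0) :
    (LinearMap.range (inl R F1 F0)).map (e₁.prodCongr e₀).toLinearMap =
      LinearMap.range (inl R F1 F0) := by
  rw [range_inl, Submodule.map_equiv_eq_comap_symm, ← LinearMap.ker_comp]
  ext ⟨x, y⟩
  simp

theorem LinearEquiv.map_range_inr_prodCongr (e₁ : F1 ≃ₗ[R] F1) (e₀ : F0 ≃ₗ[R] F0) :
    (LinearMap.range (inr R F1 F0)).map (e₁.prodCongr e₀).toLinearMap =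
      LinearMap.range (inr R F1 F0) := by
  rw [range_inr, Submodule.map_equiv_eq_comap_symm, ← LinearMap.ker_comp]
  ext ⟨x, y⟩
  simp

end Blocks

section

variable {R M N : Type*} [CommRing R] [AddCommGroup M] [Module R M] [AddCommGroup N] [Module R N]

theorem LinearMap.bijective_of_forall_eq_add_smul [Module.Finite R M] (f : M →ₗ[R] M) {π : R}
    (hπ : π ∈ (⊥ : Ideal R).jacobson) (h : ∀ z, ∃ x w, z = f x + π • w) :
    Function.Bijective f := by
  have hsurj : Function.Surjective f := by
    rw [← range_eq_top, ← top_le_iff]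
    refine Submodule.le_of_le_smul_of_le_jacobson_bot Module.Finite.fg_top
      (Ideal.span_singleton_le_iff_mem _ |>.mpr hπ) fun z _ => ?_
    obtain ⟨x, w, rfl⟩ := h z
    exact Submodule.add_mem_sup (mem_range_self f x)
      (Submodule.smul_mem_smul (Ideal.mem_span_singleton_self π) Submodule.mem_top)
  exact ⟨OrzechProperty.injective_of_surjective_endomorphism f hsurj, hsurj⟩

theorem LinearMap.exists_eq_smul_of_forall_exists_eq_smul [Module.Projective R M]
    (f : M →ₗ[R] N) (r : R) (h : ∀ x, ∃ y, f x = r • y) : ∃ f' : M →ₗ[R] N, f = r • f' := by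
  obtain ⟨f', hf'⟩ := Module.projective_lifting_property
    (r • LinearMap.id : N →ₗ[R] N).rangeRestrict
    (f.codRestrict _ fun x => (h x).imp fun _ hy => hy.symm) (surjective_rangeRestrict _)
  exact ⟨f', LinearMap.ext fun x => (congrArg Subtype.val (LinearMap.congr_fun hf' x)).symm⟩

end

theorem WittVector.natCast_mem_jacobson_bot (p : ℕ) [Fact p.Prime] (k : Type*) [Field k]
    [CharP k p] : (p : WittVector p k) ∈ (⊥ : Ideal (WittVector p k)).jacobson :=
  Ideal.mem_jacobson_bot.mpr fun y => WittVector.isUnit_of_coeff_zero_ne_zero _ <| by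
    simp [WittVector.add_coeff_zero, WittVector.mul_coeff_zero, WittVector.coeff_p_zero]

section Factorization

variable {R F1 F0 : Type*} [CommRing R] [AddCommGroup F1] [AddCommGroup F0] [Module R F1]
  [Module R F0] [Module.Projective R F1] [Module.Finite R F0]

theorem LinearEquiv.exists_eq_unipotent_comp_prodCongr_comp_unipotent {π : R}
    (hπ : π ∈ (⊥ : Ideal R).jacobson) (g : (F1 × F0) ≃ₗ[R] (F1 × F0))
    (hg : ∀ x : F1, ∃ y : F0, (g (x, 0)).2 = π • y) :
    ∃ (nplus : F0 →ₗ[R] F1) (nminus : F1 →ₗ[R] F0) (h : (F1 × F0) ≃ₗ[R] (F1 × F0)),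
      Submodule.map h.toLinearMap (LinearMap.range (inl R F1 F0)) =
        LinearMap.range (inl R F1 F0) ∧
      Submodule.map h.toLinearMap (LinearMap.range (inr R F1 F0)) =
        LinearMap.range (inr R F1 F0) ∧
      g.toLinearMap =
        (1 + inl R F1 F0 ∘ₗ nplus ∘ₗ snd R F1 F0) ∘ₗ h.toLinearMap ∘ₗ
          (1 + inr R F1 F0 ∘ₗ (π • nminus) ∘ₗ fst R F1 F0) := by
  set a := fst R F1 F0 ∘ₗ g.toLinearMap ∘ₗ inl R F1 F0
  set b := fst R F1 F0 ∘ₗ g.toLinearMap ∘ₗ inr R F1 F0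
  set c := snd R F1 F0 ∘ₗ g.toLinearMap ∘ₗ inl R F1 F0
  set d := snd R F1 F0 ∘ₗ g.toLinearMap ∘ₗ inr R F1 F0
  have hblocks : g.toLinearMap = (a.coprod b).prod (c.coprod d) := by
    ext <;> simp [a, b, c, d, Prod.mk_zero_zero]
  obtain ⟨c', hc'⟩ := c.exists_eq_smul_of_forall_exists_eq_smul π hg
  have hd : Function.Bijective d := by
    refine d.bijective_of_forall_eq_add_smul hπ fun z => ?_
    obtain ⟨⟨x, y⟩, hxy⟩ := g.surjective (0, z)
    refine ⟨y, c' x, ?_⟩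
    have hz : z = c x + d y := by
      simpa [hxy] using congrArg Prod.snd (LinearMap.congr_fun hblocks (x, y))
    rw [hz, hc', LinearMap.smul_apply, add_comm]
  set dE := LinearEquiv.ofBijective d hd
  have hs := bijective_sub_comp_symm_comp_of_bijective a b c dE (hblocks ▸ g.bijective)
  refine ⟨b ∘ₗ dE.symm, dE.symm ∘ₗ c', (LinearEquiv.ofBijective _ hs).prodCongr dE,
    map_range_inl_prodCongr _ _, map_range_inr_prodCongr _ _, ?_⟩
  rw [coe_prodCongr, ← comp_smul, ← hc', hblocks]
  exact coprod_prod_coprod_eq_of_linearEquiv₂₂ a b c dE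

end Factorization

theorem stmt14_general (p : ℕ) [Fact p.Prime] (k : Type*) [Field k] [CharP k p]
    (F1 F0 : Type*) [AddCommGroup F1] [AddCommGroup F0]
    [Module (WittVector p k) F1] [Module (WittVector p k) F0]
    [Module.Free (WittVector p k) F1] [Module.Finite (WittVector p k) F0]
    (g : (F1 × F0) ≃ₗ[WittVector p k] (F1 × F0))
    (hg : ∀ x : F1, ∃ y : F0, (g (x, 0)).2 = (p : WittVector p k) • y) :
    ∃ (nplus : F0 →ₗ[WittVector p k] F1) (nminus : F1 →ₗ[WittVector p k] F0)
      (h : (F1 × F0) ≃ₗ[WittVector p k] (F1 × F0)),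
      Submodule.map h.toLinearMap
          (LinearMap.range (LinearMap.inl (WittVector p k) F1 F0)) =
        LinearMap.range (LinearMap.inl (WittVector p k) F1 F0) ∧
      Submodule.map h.toLinearMap
          (LinearMap.range (LinearMap.inr (WittVector p k) F1 F0)) =
        LinearMap.range (LinearMap.inr (WittVector p k) F1 F0) ∧
      g.toLinearMap =
        ((1 : Module.End (WittVector p k) (F1 × F0)) +
            (LinearMap.inl (WittVector p k) F1 F0) ∘ₗ nplus ∘ₗ
              (LinearMap.snd (WittVector p k) F1 F0)) ∘ₗ
          h.toLinearMap ∘ₗ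
          ((1 : Module.End (WittVector p k) (F1 × F0)) +
            (LinearMap.inr (WittVector p k) F1 F0) ∘ₗ
              ((p : WittVector p k) • nminus) ∘ₗ
              (LinearMap.fst (WittVector p k) F1 F0)) := by
  exact g.exists_eq_unipotent_comp_prodCongr_comp_unipotent
    (WittVector.natCast_mem_jacobson_bot p k) hg

/-- Gaussian-elimination factorization. If `g` is a `W(k)`-linear
automorphism of `M = F¹ ⊕ F⁰` whose reduction mod `p` preserves `F¹/pF¹` (i.e. the
`F⁰`-component of `g` on `F¹` is divisible by `p`), then `g = u ∘ h ∘ w` with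
`u = 1 + nplus` (`nplus ∈ Hom(F⁰,F¹)`), `h` an automorphism preserving both summands, and
`w = 1 + p·nminus` (`nminus ∈ Hom(F¹,F⁰)`), so that `w ≡ 1 mod p`. -/
theorem stmt14 (p : ℕ) [Fact p.Prime] (k : Type*) [Field k] [CharP k p] [ExpChar k p]
    [PerfectRing k p]
    (F1 F0 : Type*) [AddCommGroup F1] [AddCommGroup F0]
    [Module (WittVector p k) F1] [Module (WittVector p k) F0]
    [Module.Free (WittVector p k) F1] [Module.Finite (WittVector p k) F1]
    [Module.Free (WittVector p k) F0] [Module.Finite (WittVector p k) F0]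
    (g : (F1 × F0) ≃ₗ[WittVector p k] (F1 × F0))
    (hg : ∀ x : F1, ∃ y : F0, (g (x, 0)).2 = (p : WittVector p k) • y) :
    ∃ (nplus : F0 →ₗ[WittVector p k] F1) (nminus : F1 →ₗ[WittVector p k] F0)
      (h : (F1 × F0) ≃ₗ[WittVector p k] (F1 × F0)),
      Submodule.map h.toLinearMap
          (LinearMap.range (LinearMap.inl (WittVector p k) F1 F0)) =
        LinearMap.range (LinearMap.inl (WittVector p k) F1 F0) ∧
      Submodule.map h.toLinearMap
          (LinearMap.range (LinearMap.inr (WittVector p k) F1 F0)) =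
        LinearMap.range (LinearMap.inr (WittVector p k) F1 F0) ∧
      g.toLinearMap =
        ((1 : Module.End (WittVector p k) (F1 × F0)) +
            (LinearMap.inl (WittVector p k) F1 F0) ∘ₗ nplus ∘ₗ
              (LinearMap.snd (WittVector p k) F1 F0)) ∘ₗ
          h.toLinearMap ∘ₗ
          ((1 : Module.End (WittVector p k) (F1 × F0)) +
            (LinearMap.inr (WittVector p k) F1 F0) ∘ₗ
              ((p : WittVector p k) • nminus) ∘ₗ
              (LinearMap.fst (WittVector p k) F1 F0)) :=
  stmt14_general p k F1 F0 g hg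
end
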